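/- arXiv:quant-ph/0609234 — 2 statements merged into one kernel-verified Lean document; each statement's English description precedes it below -/
import Mathlib

section
/- Let Γ be the symmetric group on three elements, with x the transposition of the first two elements, y the transposition of the last two elements, and z = x·y·x the transposition of the first and third elements. Then for all real numbers φ₁, φ₂, the matrix W = a • P_x + b • P_y + c • P_z is unitary, where a = (1 + e^{iφ₁} + e^{iφ₂})/3, b = (1 + e^{2πi/3}e^{iφ₁} + e^{-2πi/3}e^{iφ₂})/3, c = (1 + e^{-2πi/3}e^{iφ₁} + e^{2πi/3}e^{iφ₂})/3. Hence the Cayley graph of S₃ with generating set {x, y, xyx} admits a homogeneous scalar quantum walk. -/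
/-- The permutation matrix of right multiplication by `g`:
`(P_g)_{v,w} = 1` if `v = w * g` and `0` otherwise. -/
def rightMulMatrix {Γ : Type*} [Group Γ] [DecidableEq Γ] (g : Γ) : Matrix Γ Γ ℂ :=
  fun v w => if v = w * g then 1 else 0

section aux

variable {Γ : Type*} [Group Γ] [DecidableEq Γ] [Fintype Γ]

lemma rightMulMatrix_mul (g h : Γ) :
    rightMulMatrix g * rightMulMatrix h = rightMulMatrix (h * g) := by
  ext v w
  simp only [Matrix.mul_apply, rightMulMatrix, ite_mul, one_mul, zero_mul]
  have h1 : ∀ u : Γ, (if v = u * g then (if u = w * h then (1:ℂ) else 0) else 0)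
      = if u = v * g⁻¹ then (if u = w * h then (1:ℂ) else 0) else 0 := by
    intro u
    congr 1
    exact propext ⟨fun h' => by rw [h']; group, fun h' => by rw [h']; group⟩
  rw [Finset.sum_congr rfl fun u _ => h1 u, Finset.sum_ite_eq' Finset.univ (v * g⁻¹)]
  have h2 : (v * g⁻¹ = w * h) ↔ (v = w * (h * g)) := by
    constructor <;> intro h'
    · rw [← mul_assoc, ← h']; group
    · rw [h']; group
  simp [h2]

omit [Fintype Γ] in
lemma rightMulMatrix_star (g : Γ) : star (rightMulMatrix g) = rightMulMatrix g⁻¹ := by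
  ext v w
  simp only [Matrix.star_apply, rightMulMatrix]
  have h : (w = v * g) ↔ (v = w * g⁻¹) := by constructor <;> rintro rfl <;> simp
  rw [show (if w = v * g then (1:ℂ) else 0) = (if v = w * g⁻¹ then 1 else 0) by simp [h]]
  simp [apply_ite (star : ℂ → ℂ)]

omit [Fintype Γ] in
lemma rightMulMatrix_one : rightMulMatrix (1 : Γ) = 1 := by
  ext v w
  simp [rightMulMatrix, Matrix.one_apply, eq_comm]

end aux

lemma walk_key1 (ω ω' u v u' v' : ℂ) (hS : ω + ω' = -1) (hP : ω * ω' = 1)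
    (hu : u * u' = 1) (hv : v * v' = 1) :
    ((1+u+v)/3) * ((1+u'+v')/3) + ((1+ω*u+ω'*v)/3) * ((1+ω'*u'+ω*v')/3)
      + ((1+ω'*u+ω*v)/3) * ((1+ω*u'+ω'*v')/3) = 1 := by
  linear_combination ((u+u'+v+v'+(u*v'+u'*v)*(ω+ω'-1))/9) * hS
    + ((4-2*(u*v'+u'*v))/9) * hP + ((1+2*ω*ω')/9) * hu + ((1+2*ω*ω')/9) * hv

lemma walk_key2 (ω ω' u v u' v' : ℂ) (hS : ω + ω' = -1) (hP : ω * ω' = 1)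
    (hu : u * u' = 1) (hv : v * v' = 1) :
    ((1+u+v)/3) * ((1+ω'*u'+ω*v')/3) + ((1+ω'*u+ω*v)/3) * ((1+u'+v')/3)
      + ((1+ω*u+ω'*v)/3) * ((1+ω*u'+ω'*v')/3) = 0 := by
  linear_combination ((u+u'+v+v'+u*v'+u'*v+ω+ω'+1)/9) * hS + ((u*v'+u'*v-2)/9) * hP
    + ((2*ω'+ω^2)/9) * hu + ((2*ω+ω'^2)/9) * hv

/-- On the symmetric group `S₃` with `x` the transposition of the first two elements,
`y` the transposition of the last two, and `z = x y x`, the matrix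
`W = a • P_x + b • P_y + c • P_z` with the stated coefficients is unitary for all reals
`φ₁, φ₂`: the Cayley graph of `S₃` with generating set `{x, y, xyx}` admits a
homogeneous scalar quantum walk. -/
theorem symmetric_group_S3_walk (φ₁ φ₂ : ℝ) (a b c : ℂ)
    (ha : a = (1 + Complex.exp (φ₁ * Complex.I) + Complex.exp (φ₂ * Complex.I)) / 3)
    (hb : b = (1 + Complex.exp (2 * Real.pi * Complex.I / 3) * Complex.exp (φ₁ * Complex.I)
      + Complex.exp (-(2 * Real.pi * Complex.I) / 3) * Complex.exp (φ₂ * Complex.I)) / 3)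
    (hc : c = (1 + Complex.exp (-(2 * Real.pi * Complex.I) / 3) * Complex.exp (φ₁ * Complex.I)
      + Complex.exp (2 * Real.pi * Complex.I / 3) * Complex.exp (φ₂ * Complex.I)) / 3) :
    (a • rightMulMatrix (Equiv.swap (0 : Fin 3) 1)
      + b • rightMulMatrix (Equiv.swap (1 : Fin 3) 2)
      + c • rightMulMatrix
          (Equiv.swap (0 : Fin 3) 1 * Equiv.swap (1 : Fin 3) 2 * Equiv.swap (0 : Fin 3) 1)) ∈
      Matrix.unitaryGroup (Equiv.Perm (Fin 3)) ℂ := by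
  -- scalar facts
  have hS : Complex.exp (2 * Real.pi * Complex.I / 3)
      + Complex.exp (-(2 * Real.pi * Complex.I) / 3) = -1 := by
    have e1 : (2 * (Real.pi:ℂ) * Complex.I / 3) = ((2 * Real.pi / 3 : ℝ) : ℂ) * Complex.I := by
      push_cast; ring
    have e2 : (-(2 * (Real.pi:ℂ) * Complex.I) / 3)
        = ((-(2 * Real.pi / 3) : ℝ) : ℂ) * Complex.I := by
      push_cast; ring
    have hcos : Real.cos (2 * Real.pi / 3) = -(1/2) := by
      have h3 : (2 * Real.pi / 3 : ℝ) = Real.pi - Real.pi / 3 := by ring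
      rw [h3, Real.cos_pi_sub, Real.cos_pi_div_three]
    rw [e1, e2, Complex.exp_mul_I, Complex.exp_mul_I, ← Complex.ofReal_cos,
      ← Complex.ofReal_sin, ← Complex.ofReal_cos, ← Complex.ofReal_sin, Real.cos_neg,
      Real.sin_neg, hcos]
    push_cast
    ring
  have hP : Complex.exp (2 * Real.pi * Complex.I / 3)
      * Complex.exp (-(2 * Real.pi * Complex.I) / 3) = 1 := by
    rw [← Complex.exp_add,
      show (2 * (Real.pi:ℂ) * Complex.I / 3 + -(2 * (Real.pi:ℂ) * Complex.I) / 3) = 0 by ring,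
      Complex.exp_zero]
  have hu : Complex.exp (φ₁ * Complex.I) * Complex.exp (-(φ₁ * Complex.I)) = 1 := by
    rw [← Complex.exp_add, add_neg_cancel, Complex.exp_zero]
  have hv : Complex.exp (φ₂ * Complex.I) * Complex.exp (-(φ₂ * Complex.I)) = 1 := by
    rw [← Complex.exp_add, add_neg_cancel, Complex.exp_zero]
  -- conjugates of the coefficients
  have hsa : star a = (1 + Complex.exp (-(φ₁ * Complex.I))
      + Complex.exp (-(φ₂ * Complex.I))) / 3 := by
    rw [Complex.star_def, ha]
    simp only [map_div₀, map_add, map_mul, map_one, map_ofNat, map_neg, ← Complex.exp_conj,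
      Complex.conj_ofReal, Complex.conj_I]
    ring_nf
  have hsb : star b = (1 + Complex.exp (-(2 * Real.pi * Complex.I) / 3)
        * Complex.exp (-(φ₁ * Complex.I))
      + Complex.exp (2 * Real.pi * Complex.I / 3) * Complex.exp (-(φ₂ * Complex.I))) / 3 := by
    rw [Complex.star_def, hb]
    simp only [map_div₀, map_add, map_mul, map_one, map_ofNat, map_neg, ← Complex.exp_conj,
      Complex.conj_ofReal, Complex.conj_I]
    ring_nf
  have hsc : star c = (1 + Complex.exp (2 * Real.pi * Complex.I / 3)
        * Complex.exp (-(φ₁ * Complex.I))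
      + Complex.exp (-(2 * Real.pi * Complex.I) / 3) * Complex.exp (-(φ₂ * Complex.I))) / 3 := by
    rw [Complex.star_def, hc]
    simp only [map_div₀, map_add, map_mul, map_one, map_ofNat, map_neg, ← Complex.exp_conj,
      Complex.conj_ofReal, Complex.conj_I]
    ring_nf
  have k1 : a * star a + b * star b + c * star c = 1 := by
    rw [hsa, hsb, hsc, ha, hb, hc]
    exact walk_key1 _ _ _ _ _ _ hS hP hu hv
  have k2 : a * star b + c * star a + b * star c = 0 := by
    rw [hsa, hsb, hsc, ha, hb, hc]
    exact walk_key2 _ _ _ _ _ _ hS hP hu hv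
  have k3 : a * star c + b * star a + c * star b = 0 := by
    rw [hsa, hsb, hsc, ha, hb, hc]
    exact walk_key2 _ _ _ _ _ _ (by rw [add_comm] at hS; exact hS)
      (by rw [mul_comm] at hP; exact hP) hu hv
  -- matrix computation
  rw [Matrix.mem_unitaryGroup_iff]
  set x : Equiv.Perm (Fin 3) := Equiv.swap 0 1 with hx
  set y : Equiv.Perm (Fin 3) := Equiv.swap 1 2 with hy
  have g11 : x⁻¹ * x = 1 := by rw [hx]; decide
  have g21 : y⁻¹ * x = y * x := by rw [hx, hy]; decide
  have g31 : (x * y * x)⁻¹ * x = x * y := by rw [hx, hy]; decide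
  have g12 : x⁻¹ * y = x * y := by rw [hx, hy]; decide
  have g22 : y⁻¹ * y = 1 := by rw [hy]; decide
  have g32 : (x * y * x)⁻¹ * y = y * x := by rw [hx, hy]; decide
  have g13 : x⁻¹ * (x * y * x) = y * x := by rw [hx, hy]; decide
  have g23 : y⁻¹ * (x * y * x) = x * y := by rw [hx, hy]; decide
  have g33 : (x * y * x)⁻¹ * (x * y * x) = 1 := by rw [hx, hy]; decide
  simp only [star_add, star_smul, rightMulMatrix_star]
  simp only [Matrix.add_mul, Matrix.mul_add, smul_mul_assoc, mul_smul_comm, smul_smul,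
    rightMulMatrix_mul]
  rw [g11, g21, g31, g12, g22, g32, g13, g23, g33]
  conv_rhs => rw [← rightMulMatrix_one (Γ := Equiv.Perm (Fin 3))]
  match_scalars
  · linear_combination k1
  · linear_combination k3
  · linear_combination k2
end

section
/- Let Γ = ℤ/6ℤ with generating set Δ = {1, 5, 2, 4} (i.e. {δ₁, δ₁⁻¹, δ₂, δ₂⁻¹} with δ₁ = 1 and δ₂ = 2), whose Cayley graph is the Johnson graph J(4,2). Then for every real number φ and every sign ε ∈ {+1, −1}, the matrix W = (e^{iφ}/2) • P_1 + (1/2) • P_5 + (ε/2) • P_2 + (−ε e^{iφ}/2) • P_4 is unitary. Hence the Johnson graph J(4,2) admits a homogeneous scalar quantum walk. -/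
/-- The permutation matrix of right translation by `g` in an additive group:
`(P_g)_{v,w} = 1` if `v = w + g` and `0` otherwise. -/
def rightAddMatrix {Γ : Type*} [AddGroup Γ] [DecidableEq Γ] (g : Γ) : Matrix Γ Γ ℂ :=
  fun v w => if v = w + g then 1 else 0

lemma rightAddMatrix_mul {Γ : Type*} [AddCommGroup Γ] [Fintype Γ] [DecidableEq Γ] (a b : Γ) :
    rightAddMatrix a * rightAddMatrix b = rightAddMatrix (a + b) := by
  ext v w
  rw [Matrix.mul_apply]
  simp only [rightAddMatrix, ite_mul, one_mul, zero_mul]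
  rw [Finset.sum_eq_single (w + b)]
  · simp [add_assoc, add_comm b a]
  · intro x _ hx
    simp [hx]
  · intro h; exact absurd (Finset.mem_univ _) h

lemma rightAddMatrix_star {Γ : Type*} [AddCommGroup Γ] [DecidableEq Γ] (a : Γ) :
    star (rightAddMatrix (Γ := Γ) a) = rightAddMatrix (-a) := by
  ext v w
  simp only [Matrix.star_apply, rightAddMatrix, apply_ite (star : ℂ → ℂ), star_one, star_zero]
  by_cases h : w = v + a
  · rw [if_pos h, if_pos (by rw [h]; abel)]
  · rw [if_neg h, if_neg (fun hh => h (by rw [hh]; abel))]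

lemma rightAddMatrix_zero {Γ : Type*} [AddGroup Γ] [DecidableEq Γ] :
    rightAddMatrix (0 : Γ) = 1 := by
  ext v w
  simp [rightAddMatrix, Matrix.one_apply, eq_comm]

/-- On `ℤ/6ℤ` with generating set `{1, 5, 2, 4}` (whose Cayley graph is the Johnson
graph `J(4,2)`), the matrix
`W = (e^{iφ}/2) • P₁ + (1/2) • P₅ + (ε/2) • P₂ + (−ε e^{iφ}/2) • P₄`
is unitary for every real `φ` and sign `ε ∈ {+1, −1}`: the Johnson graph `J(4,2)`
admits a homogeneous scalar quantum walk. -/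
theorem johnson_J42_walk (φ ε : ℝ) (hε : ε = 1 ∨ ε = -1) :
    ((Complex.exp (φ * Complex.I) / 2) • rightAddMatrix (1 : ZMod 6)
      + (1 / 2 : ℂ) • rightAddMatrix (5 : ZMod 6)
      + ((ε : ℂ) / 2) • rightAddMatrix (2 : ZMod 6)
      + (-(ε : ℂ) * Complex.exp (φ * Complex.I) / 2) • rightAddMatrix (4 : ZMod 6)) ∈
      Matrix.unitaryGroup (ZMod 6) ℂ := by
  rw [Matrix.mem_unitaryGroup_iff]
  have he : Complex.exp (φ * Complex.I) * (starRingEnd ℂ) (Complex.exp (φ * Complex.I)) = 1 := by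
    rw [← Complex.exp_conj, ← Complex.exp_add]
    simp
  have hc : (starRingEnd ℂ) (ε : ℂ) = (ε : ℂ) := Complex.conj_ofReal ε
  rw [show (1 : Matrix (ZMod 6) (ZMod 6) ℂ) = rightAddMatrix (0 : ZMod 6) from
    (rightAddMatrix_zero).symm]
  simp only [star_add, star_smul, rightAddMatrix_star, Matrix.add_mul, Matrix.mul_add,
    smul_mul_assoc, mul_smul_comm, smul_smul, rightAddMatrix_mul]
  simp only [show (1 + -1 : ZMod 6) = 0 from by decide,
    show (1 + -5 : ZMod 6) = 2 from by decide,
    show (1 + -2 : ZMod 6) = 5 from by decide,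
    show (1 + -4 : ZMod 6) = 3 from by decide,
    show (5 + -1 : ZMod 6) = 4 from by decide,
    show (5 + -5 : ZMod 6) = 0 from by decide,
    show (5 + -2 : ZMod 6) = 3 from by decide,
    show (5 + -4 : ZMod 6) = 1 from by decide,
    show (2 + -1 : ZMod 6) = 1 from by decide,
    show (2 + -5 : ZMod 6) = 3 from by decide,
    show (2 + -2 : ZMod 6) = 0 from by decide,
    show (2 + -4 : ZMod 6) = 4 from by decide,
    show (4 + -1 : ZMod 6) = 3 from by decide,
    show (4 + -5 : ZMod 6) = 5 from by decide,
    show (4 + -2 : ZMod 6) = 2 from by decide,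
    show (4 + -4 : ZMod 6) = 0 from by decide]
  simp only [Complex.star_def, map_div₀, map_mul, map_neg, map_one, map_ofNat, hc,
    Complex.conj_ofReal]
  rcases hε with rfl | rfl <;> push_cast <;> match_scalars <;>
    first
      | ring1
      | linear_combination he/2
      | linear_combination (-1/2 : ℂ) * he
end
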